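/- Let α : ℝ → ℝ be defined by α(x) = arcsin((1-2x)/√5) + arcsin((1+2x)/√5) + 2·arctan(2) - π. Then (1/π)·∫_{-1/2}^{1/2} α(x) dx = (2/π)·(arctan(1/3) + arctan(2)) - (√5 - 1)/π - 1/2. -/

import Mathlib

/-!
The substitution `u = (1 ± 2x)/√5` turns each arcsin term into `(√5/2) ∫₀^{2/√5} arcsin u du`,
which `u ↦ u arcsin u + √(1 - u²)` evaluates; `arcsin (2/√5) = arctan 2` makes the result
`4 arctan 2 + 1 - √5 - π`, and `arctan 2 = arctan (1/3) + π/4` puts it in the stated form.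
-/

open Real Set intervalIntegral

theorem hasDerivAt_mul_arcsin_add_sqrt {u : ℝ} (hu : u ∈ Ioo (-1) 1) :
    HasDerivAt (fun u => u * arcsin u + √(1 - u ^ 2)) (arcsin u) u := by
  have hpos : 0 < 1 - u ^ 2 := by nlinarith [hu.1, hu.2]
  have h := ((hasDerivAt_id' u).mul (hasDerivAt_arcsin hu.1.ne' hu.2.ne)).add
    (((hasDerivAt_pow 2 u).const_sub 1).sqrt hpos.ne')
  refine h.congr_deriv ?_
  have := sqrt_pos.2 hpos
  field_simp
  ring

theorem integral_arcsin {a b : ℝ} (ha : a ∈ Icc (-1) 1) (hb : b ∈ Icc (-1) 1) :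
    ∫ u in a..b, arcsin u = (b * arcsin b + √(1 - b ^ 2)) - (a * arcsin a + √(1 - a ^ 2)) := by
  refine integral_eq_sub_of_hasDeriv_right (f := fun u => u * arcsin u + √(1 - u ^ 2))
    (by fun_prop) (fun u hu => ?_) (continuous_arcsin.intervalIntegrable _ _)
  refine (hasDerivAt_mul_arcsin_add_sqrt ⟨?_, ?_⟩).hasDerivWithinAt
  · exact lt_of_le_of_lt (le_min ha.1 hb.1) hu.1
  · exact lt_of_lt_of_le hu.2 (max_le ha.2 hb.2)

theorem arcsin_two_div_sqrt_five : arcsin (2 / √5) = arctan 2 := by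
  rw [arctan_eq_arcsin]; norm_num

theorem arctan_two_eq_arctan_one_third_add_pi_div_four : arctan 2 = arctan (1 / 3) + π / 4 := by
  have h := arctan_add (x := 1 / 3) (y := 1) (by norm_num)
  rw [arctan_one] at h
  norm_num at h
  linarith

theorem integral_arcsin_one_add_two_mul_div_sqrt_five :
    ∫ x in (-1 / 2 : ℝ)..1 / 2, arcsin ((1 + 2 * x) / √5) = arctan 2 + (1 - √5) / 2 := by
  have h5 : (0 : ℝ) < √5 := by positivity
  have hsq : (2 / √5) ^ 2 = (4 / 5 : ℝ) := by rw [div_pow, sq_sqrt] <;> norm_num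
  have hmem : 2 / √5 ∈ Icc (-1 : ℝ) 1 := by
    constructor
    · linarith [show 0 ≤ 2 / √5 by positivity]
    · nlinarith [show 0 ≤ 2 / √5 by positivity]
  have hsub : ∀ x : ℝ, (1 + 2 * x) / √5 = (2 / √5) * x + 1 / √5 := fun x => by ring
  simp_rw [hsub]
  rw [integral_comp_mul_add _ (by positivity), show 2 / √5 * (-1 / 2) + 1 / √5 = 0 by ring,
    show 2 / √5 * (1 / 2) + 1 / √5 = 2 / √5 by ring, integral_arcsin (by norm_num) hmem,
    arcsin_two_div_sqrt_five, hsq, show (1 : ℝ) - 4 / 5 = 1 / 5 by norm_num, sqrt_div' _ (by norm_num)]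
  simp only [arcsin_zero, mul_zero, zero_pow two_ne_zero, sub_zero, sqrt_one, zero_add, smul_eq_mul]
  field_simp
  ring

theorem integral_arcsin_one_sub_two_mul_div_sqrt_five :
    ∫ x in (-1 / 2 : ℝ)..1 / 2, arcsin ((1 - 2 * x) / √5) = arctan 2 + (1 - √5) / 2 := by
  have h := integral_comp_neg (a := (-1 / 2 : ℝ)) (b := 1 / 2) fun x => arcsin ((1 + 2 * x) / √5)
  simp only [mul_neg, ← sub_eq_add_neg, neg_div, neg_neg] at h
  rw [neg_div, h, ← neg_div]
  exact integral_arcsin_one_add_two_mul_div_sqrt_five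

theorem probability_value (α : ℝ → ℝ)
    (hα : ∀ x, α x = Real.arcsin ((1 - 2*x) / Real.sqrt 5) + Real.arcsin ((1 + 2*x) / Real.sqrt 5)
        + 2 * Real.arctan 2 - Real.pi) :
    (1 / Real.pi) * ∫ x in (-(1:ℝ)/2)..(1/2), α x
      = (2 / Real.pi) * (Real.arctan (1/3) + Real.arctan 2) - (Real.sqrt 5 - 1) / Real.pi - 1/2 := by
  have hintegral : ∫ x in (-(1:ℝ)/2)..(1/2), α x = 4 * arctan 2 + 1 - √5 - π := by
    simp_rw [hα]
    rw [integral_sub, integral_add, integral_add, integral_arcsin_one_sub_two_mul_div_sqrt_five,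
      integral_arcsin_one_add_two_mul_div_sqrt_five, integral_const, integral_const]
    · simp only [smul_eq_mul]; ring
    all_goals exact Continuous.intervalIntegrable (by fun_prop) _ _
  rw [hintegral, arctan_two_eq_arctan_one_third_add_pi_div_four]
  field_simp
  ring
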